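/- arXiv:2510.07245 — 4 statements merged into one kernel-verified Lean document; each statement's English description precedes it below -/
import Mathlib

section
/- Let 𝒯 be a teacher class over (X,Y,Φ) and let H be a nonempty history consistent with 𝒯. Then the minimum over all deterministic DFF algorithms 𝒜 of the worst-case mistake bound M(𝒜,𝒯,H) equals DFFdim(𝒯,H). -/
open scoped Classical

/-- A teacher over examples `X`, labels `Y` and Boolean features `Φ`:
a labeling function together with a feature-feedback function that, whenever
two examples receive different labels, returns a feature of `Φ` satisfied by
the first example and not by the second. -/
structure Teacher (X Y : Type) (Φ : Set (X → Bool)) where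
  label : X → Y
  feedback : X → X → Option (X → Bool)
  feedback_spec : ∀ x xh : X, label x ≠ label xh →
    ∃ φ ∈ Φ, feedback x xh = some φ ∧ φ x = true ∧ φ xh = false

/-- A teacher is consistent with a history `H` of labeled examples. -/
def ConsistentH {X Y : Type} {Φ : Set (X → Bool)} (T : Teacher X Y Φ)
    (H : Set (X × Y)) : Prop :=
  ∀ p ∈ H, T.label p.1 = p.2

/-- Restriction of a teacher class by one round of DFF interaction: the
teachers that label `x` with `y` and give feature feedback `φ` on `(x, xh)`. -/
def TRestrict {X Y : Type} {Φ : Set (X → Bool)} (𝒯 : Set (Teacher X Y Φ))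
    (x xh : X) (y : Y) (φ : X → Bool) : Set (Teacher X Y Φ) :=
  {T | T ∈ 𝒯 ∧ T.label x = y ∧ T.feedback x xh = some φ}

/-- `ShatteredDFFT Φ 𝒯 H d` holds iff there is a DFF tree of height `d`
shattered by the teacher class `𝒯` and the history `H`: at a leaf, some
teacher of the current class is consistent with the accumulated history
(i.e. every root-to-leaf path of the tree is consistent with some teacher of
the original class that is consistent with the original history); at an inner
node a next example `x` is presented, and for every available explanation
pair `(xh, yh)` (an element of the history or a labeled example revealed
along the path, all of which are accumulated in `H`) there is teacher
feedback `(y, φ)` with `y ≠ yh` and `φ ∈ Φ` leading to a shattered subtree of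
height `d` for the correspondingly restricted class and extended history. -/
inductive ShatteredDFFT {X Y : Type} (Φ : Set (X → Bool)) :
    Set (Teacher X Y Φ) → Set (X × Y) → ℕ → Prop
  | leaf (𝒯 : Set (Teacher X Y Φ)) (H : Set (X × Y))
      (h : ∃ T ∈ 𝒯, ConsistentH T H) : ShatteredDFFT Φ 𝒯 H 0
  | node (𝒯 : Set (Teacher X Y Φ)) (H : Set (X × Y)) (d : ℕ) (x : X)
      (y : X × Y → Y) (φ : X × Y → (X → Bool))
      (hne : ∀ p ∈ H, y p ≠ p.2) (hΦ : ∀ p ∈ H, φ p ∈ Φ)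
      (h : ∀ p ∈ H,
        ShatteredDFFT Φ (TRestrict 𝒯 x p.1 (y p) (φ p)) (insert (x, y p) H) d) :
      ShatteredDFFT Φ 𝒯 H (d + 1)

/-- The DFF dimension of a teacher class `𝒯` with history `H`: the maximal
height of a DFF tree shattered by `𝒯` and `H` (possibly infinite). -/
noncomputable def DFFdim {X Y : Type} (Φ : Set (X → Bool))
    (𝒯 : Set (Teacher X Y Φ)) (H : Set (X × Y)) : ℕ∞ :=
  sSup {d : ℕ∞ | ∃ n : ℕ, d = n ∧ ShatteredDFFT Φ 𝒯 H n}
/-- A transcript of DFF interaction: each entry records the presented example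
`x`, the explanation `xh` and prediction `yh` output by the learner, and, on a
mistake round, the teacher feedback `(y, φ)` (`none` on correct rounds). -/
abbrev DFFTranscript (X Y : Type) : Type :=
  List (X × X × Y × Option (Y × Option (X → Bool)))

/-- A deterministic DFF algorithm: given the transcript so far and the next
example, output an explanation example together with a predicted label. -/
abbrev DFFAlg (X Y : Type) : Type := DFFTranscript X Y → X → X × Y

/-- The labeled examples revealed by a transcript: on a correct round the
predicted label is revealed to be correct; on a mistake round the teacher
reveals the correct label. -/
def revealed {X Y : Type} (tr : DFFTranscript X Y) : Set (X × Y) :=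
  {p | ∃ e ∈ tr, e.1 = p.1 ∧
    ((e.2.2.2 = none ∧ e.2.2.1 = p.2) ∨ ∃ φ, e.2.2.2 = some (p.2, φ))}

/-- One round of the realizable DFF protocol between algorithm `A` and
teacher `T`: present `x`, let the algorithm predict, and append the teacher's
feedback on a mistake. -/
noncomputable def dffStep {X Y : Type} {Φ : Set (X → Bool)} (A : DFFAlg X Y)
    (T : Teacher X Y Φ) (tr : DFFTranscript X Y) (x : X) : DFFTranscript X Y :=
  if (A tr x).2 = T.label x then tr ++ [(x, (A tr x).1, (A tr x).2, none)]
  else tr ++ [(x, (A tr x).1, (A tr x).2, some (T.label x, T.feedback x (A tr x).1))]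

/-- The transcript produced by running algorithm `A` against teacher `T` on a
finite sequence of examples. -/
noncomputable def dffRun {X Y : Type} {Φ : Set (X → Bool)} (A : DFFAlg X Y)
    (T : Teacher X Y Φ) (xs : List X) : DFFTranscript X Y :=
  xs.foldl (dffStep A T) []

/-- The number of mistake rounds in a transcript. -/
def dffMistakes {X Y : Type} (tr : DFFTranscript X Y) : ℕ :=
  tr.countP fun e => e.2.2.2.isSome

/-- A DFF algorithm is legal for `(𝒯, H)` if, on any transcript reachable by
interacting with a teacher of `𝒯` consistent with `H`, the explanation and
prediction it outputs form a pair of `H` or a previously revealed labeled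
example. -/
def LegalAlg {X Y : Type} {Φ : Set (X → Bool)} (A : DFFAlg X Y)
    (𝒯 : Set (Teacher X Y Φ)) (H : Set (X × Y)) : Prop :=
  ∀ T ∈ 𝒯, ConsistentH T H → ∀ (xs : List X) (x : X),
    A (dffRun A T xs) x ∈ H ∪ revealed (dffRun A T xs)

/-- The worst-case number of mistakes of algorithm `A` over all finite example
sequences and all teachers of `𝒯` consistent with `H` (possibly infinite). -/
noncomputable def MBound {X Y : Type} {Φ : Set (X → Bool)} (A : DFFAlg X Y)
    (𝒯 : Set (Teacher X Y Φ)) (H : Set (X × Y)) : ℕ∞ :=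
  sSup {m : ℕ∞ | ∃ T ∈ 𝒯, ConsistentH T H ∧
    ∃ xs : List X, m = (dffMistakes (dffRun A T xs) : ℕ∞)}

/-!
Lower bound: against a shattered tree of height `n`, an adversary answers each prediction
`p` of a legal algorithm by the branch of the tree below `p`; the explanation `p` is
available in the history, so every round is a mistake, and the teachers consistent with
the path survive until a leaf.

Upper bound: the standard optimal algorithm keeps the class of teachers compatible with
the feedback received so far and the history extended by the revealed examples. When this
state has finite dimension `n`, some available explanation `p` is safe, i.e. no mistake
feedback against `p` leaves a class that shatters a tree of height `n` (otherwise the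
branches would assemble into a tree of height `n + 1`). Predicting with a safe explanation,
every mistake lowers the dimension of the state, so the dimension plus the number of
mistakes never increases along a run.
-/

section Transcripts

variable {X Y : Type} {Φ : Set (X → Bool)}

lemma ConsistentH.mono {T : Teacher X Y Φ} {H₁ H₂ : Set (X × Y)} (h : ConsistentH T H₂)
    (hsub : H₁ ⊆ H₂) : ConsistentH T H₁ :=
  fun p hp => h p (hsub hp)

lemma consistentH_insert {T : Teacher X Y Φ} {H : Set (X × Y)} {x : X} {y : Y} :
    ConsistentH T (insert (x, y) H) ↔ T.label x = y ∧ ConsistentH T H := by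
  simp [ConsistentH]

@[simp] lemma revealed_nil : revealed ([] : DFFTranscript X Y) = ∅ := by
  simp [revealed]

lemma revealed_append_correct (tr : DFFTranscript X Y) (x xh : X) (yh : Y) :
    revealed (tr ++ [(x, xh, yh, none)]) = insert (x, yh) (revealed tr) := by
  ext ⟨x', y'⟩
  simp only [revealed, Set.mem_ofPred_eq, Set.mem_insert_iff, List.mem_append,
    List.mem_singleton]
  aesop

lemma revealed_append_mistake (tr : DFFTranscript X Y) (x xh : X) (yh y : Y)
    (oφ : Option (X → Bool)) :
    revealed (tr ++ [(x, xh, yh, some (y, oφ))]) = insert (x, y) (revealed tr) := by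
  ext ⟨x', y'⟩
  simp only [revealed, Set.mem_ofPred_eq, Set.mem_insert_iff, List.mem_append,
    List.mem_singleton]
  aesop

lemma dffMistakes_append_correct (tr : DFFTranscript X Y) (x xh : X) (yh : Y) :
    dffMistakes (tr ++ [(x, xh, yh, none)]) = dffMistakes tr := by
  simp [dffMistakes]

lemma dffMistakes_append_mistake (tr : DFFTranscript X Y) (x xh : X) (yh : Y)
    (f : Y × Option (X → Bool)) :
    dffMistakes (tr ++ [(x, xh, yh, some f)]) = dffMistakes tr + 1 := by
  simp [dffMistakes]

lemma dffRun_append_singleton (A : DFFAlg X Y) (T : Teacher X Y Φ) (xs : List X) (x : X) :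
    dffRun A T (xs ++ [x]) = dffStep A T (dffRun A T xs) x := by
  simp [dffRun]

lemma dffStep_of_ne {A : DFFAlg X Y} {T : Teacher X Y Φ} {tr : DFFTranscript X Y} {x : X}
    {φ : X → Bool} (hne : (A tr x).2 ≠ T.label x) (hφ : T.feedback x (A tr x).1 = some φ) :
    dffStep A T tr x = tr ++ [(x, (A tr x).1, (A tr x).2, some (T.label x, some φ))] := by
  rw [dffStep, if_neg hne, hφ]

end Transcripts

namespace ShatteredDFFT

variable {X Y : Type} {Φ : Set (X → Bool)}

lemma exists_consistent {C : Set (Teacher X Y Φ)} {H : Set (X × Y)} {n : ℕ}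
    (h : ShatteredDFFT Φ C H n) (hne : H.Nonempty) : ∃ T ∈ C, ConsistentH T H := by
  induction h with
  | leaf C H h => exact h
  | node C H d x y φ _ _ _ ih =>
    obtain ⟨p, hp⟩ := hne
    obtain ⟨T, ⟨hT, -⟩, hTc⟩ := ih p hp (Set.insert_nonempty _ _)
    exact ⟨T, hT, hTc.mono (Set.subset_insert _ _)⟩

lemma mono_height {C : Set (Teacher X Y Φ)} {H : Set (X × Y)} {n : ℕ}
    (h : ShatteredDFFT Φ C H n) (hne : H.Nonempty) {m : ℕ} (hm : m ≤ n) :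
    ShatteredDFFT Φ C H m := by
  induction h generalizing m with
  | leaf C H h => exact (Nat.le_zero.mp hm) ▸ .leaf C H h
  | node C H d x y φ hy hφ hsub ih =>
    match m with
    | 0 => exact .leaf C H ((ShatteredDFFT.node C H d x y φ hy hφ hsub).exists_consistent hne)
    | k + 1 =>
      exact .node C H k x y φ hy hφ fun p hp => ih p hp (Set.insert_nonempty _ _) (by omega)

lemma anti_history {C : Set (Teacher X Y Φ)} {H₂ : Set (X × Y)} {n : ℕ}
    (h : ShatteredDFFT Φ C H₂ n) {H₁ : Set (X × Y)} (hsub : H₁ ⊆ H₂) :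
    ShatteredDFFT Φ C H₁ n := by
  induction h generalizing H₁ with
  | leaf C H h =>
    obtain ⟨T, hT, hTc⟩ := h
    exact .leaf C H₁ ⟨T, hT, hTc.mono hsub⟩
  | node C H d x y φ hy hφ _ ih =>
    exact .node C H₁ d x y φ (fun p hp => hy p (hsub hp)) (fun p hp => hφ p (hsub hp))
      fun p hp => ih p (hsub hp) (Set.insert_subset_insert hsub)

end ShatteredDFFT

section Dimension

variable {X Y : Type} {Φ : Set (X → Bool)} {C : Set (Teacher X Y Φ)} {H : Set (X × Y)}

lemma le_DFFdim {n : ℕ} (h : ShatteredDFFT Φ C H n) : (n : ℕ∞) ≤ DFFdim Φ C H :=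
  le_sSup ⟨n, rfl, h⟩

lemma DFFdim_anti {H₁ H₂ : Set (X × Y)} (hsub : H₁ ⊆ H₂) : DFFdim Φ C H₂ ≤ DFFdim Φ C H₁ :=
  sSup_le fun _ ⟨_, hd, hk⟩ => hd ▸ le_DFFdim (hk.anti_history hsub)

lemma DFFdim_lt_of_not_shattered (hne : H.Nonempty) (hT : ∃ T ∈ C, ConsistentH T H) {n : ℕ}
    (h : ¬ ShatteredDFFT Φ C H n) : DFFdim Φ C H < n := by
  obtain ⟨k, rfl⟩ : ∃ k, n = k + 1 :=
    Nat.exists_eq_succ_of_ne_zero fun h0 => h (h0 ▸ .leaf C H hT)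
  refine lt_of_le_of_lt (sSup_le (a := (k : ℕ∞)) ?_) (by exact_mod_cast k.lt_succ_self)
  rintro _ ⟨m, rfl, hm⟩
  have hmk : m ≤ k := Nat.le_of_lt_succ (lt_of_not_ge fun hkm => h (hm.mono_height hne hkm))
  exact_mod_cast hmk

def IsSafeExplanation (Φ : Set (X → Bool)) (C : Set (Teacher X Y Φ)) (H : Set (X × Y))
    (x : X) (n : ℕ) (p : X × Y) : Prop :=
  ∀ y φ, y ≠ p.2 → φ ∈ Φ → ¬ ShatteredDFFT Φ (TRestrict C x p.1 y φ) (insert (x, y) H) n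

lemma exists_isSafeExplanation {n : ℕ} (hdim : DFFdim Φ C H = n) (x : X) :
    ∃ p ∈ H, IsSafeExplanation Φ C H x n p := by
  by_contra! hbad
  have hbranch : ∀ p : X × Y, ∃ b : Y × (X → Bool), p ∈ H → b.1 ≠ p.2 ∧ b.2 ∈ Φ ∧
      ShatteredDFFT Φ (TRestrict C x p.1 b.1 b.2) (insert (x, b.1) H) n := by
    intro p
    by_cases hp : p ∈ H
    · simp only [IsSafeExplanation, not_forall, not_not] at hbad
      obtain ⟨y, φ, hy, hφ, hsh⟩ := hbad p hp
      exact ⟨(y, φ), fun _ => ⟨hy, hφ, hsh⟩⟩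
    · exact ⟨(p.2, fun _ => true), fun h => absurd h hp⟩
  choose b hb using hbranch
  have hsucc := le_DFFdim (ShatteredDFFT.node C H n x (fun p => (b p).1) (fun p => (b p).2)
    (fun p hp => (hb p hp).1) (fun p hp => (hb p hp).2.1) fun p hp => (hb p hp).2.2)
  rw [hdim] at hsucc
  exact absurd hsucc (by exact_mod_cast n.not_succ_le_self)

end Dimension

section LowerBound

variable {X Y : Type} {Φ : Set (X → Bool)} {𝒯 : Set (Teacher X Y Φ)} {H : Set (X × Y)}
  {A : DFFAlg X Y}

lemma le_MBound_of_shattered (hH : H.Nonempty) (hA : LegalAlg A 𝒯 H)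
    {C : Set (Teacher X Y Φ)} {H' : Set (X × Y)} {n : ℕ} (hsh : ShatteredDFFT Φ C H' n)
    {xs : List X} {tr : DFFTranscript X Y} (hC : C ⊆ 𝒯) (hrun : ∀ T ∈ C, dffRun A T xs = tr)
    (hH' : H' = H ∪ revealed tr) :
    ((dffMistakes tr + n : ℕ) : ℕ∞) ≤ MBound A 𝒯 H := by
  induction hsh generalizing xs tr with
  | leaf C H' h =>
    obtain ⟨T, hT, hTc⟩ := h
    exact le_sSup ⟨T, hC hT, hTc.mono (hH' ▸ Set.subset_union_left), xs, by rw [hrun T hT]; rfl⟩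
  | node C H' d x y φ hy hφ hsub ih =>
    obtain ⟨T₀, hT₀, hT₀c⟩ := (ShatteredDFFT.node C H' d x y φ hy hφ hsub).exists_consistent
      (hH' ▸ hH.mono Set.subset_union_left)
    have hp : A tr x ∈ H' := by
      rw [hH', ← hrun T₀ hT₀]
      exact hA T₀ (hC hT₀) (hT₀c.mono (hH' ▸ Set.subset_union_left)) xs x
    set p := A tr x with hpdef
    have hrun' : ∀ T ∈ TRestrict C x p.1 (y p) (φ p),
        dffRun A T (xs ++ [x]) = tr ++ [(x, p.1, p.2, some (y p, some (φ p)))] := by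
      rintro T ⟨hT, hTy, hTφ⟩
      rw [dffRun_append_singleton, hrun T hT, hpdef, dffStep_of_ne (hTy ▸ (hy p hp).symm) hTφ,
        hTy]
    have hmistakes := ih p hp (fun T hT => hC hT.1) hrun'
      (by rw [revealed_append_mistake, Set.union_insert, hH'])
    rw [dffMistakes_append_mistake] at hmistakes
    exact le_of_eq_of_le (by ring_nf) hmistakes

lemma DFFdim_le_MBound (hH : H.Nonempty) (hA : LegalAlg A 𝒯 H) : DFFdim Φ 𝒯 H ≤ MBound A 𝒯 H :=
  sSup_le fun _ ⟨n, hd, hsh⟩ => hd ▸ by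
    simpa [dffMistakes] using le_MBound_of_shattered hH hA hsh (xs := []) (tr := [])
      subset_rfl (fun _ _ => rfl) (by simp)

end LowerBound

section OptimalAlgorithm

variable {X Y : Type} {Φ : Set (X → Bool)} {𝒯 : Set (Teacher X Y Φ)} {H : Set (X × Y)}

/-- The labels revealed by `tr` are tracked in the history, not here. -/
def versionSpace (𝒯 : Set (Teacher X Y Φ)) (tr : DFFTranscript X Y) : Set (Teacher X Y Φ) :=
  tr.foldl (fun C e =>
    match e.2.2.2 with
    | some (y, some φ) => TRestrict C e.1 e.2.1 y φ
    | _ => C) 𝒯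

@[simp] lemma versionSpace_nil : versionSpace 𝒯 ([] : DFFTranscript X Y) = 𝒯 := rfl

lemma versionSpace_append_correct (tr : DFFTranscript X Y) (x xh : X) (yh : Y) :
    versionSpace 𝒯 (tr ++ [(x, xh, yh, none)]) = versionSpace 𝒯 tr := by
  simp [versionSpace]

lemma versionSpace_append_mistake (tr : DFFTranscript X Y) (x xh : X) (yh y : Y)
    (φ : X → Bool) :
    versionSpace 𝒯 (tr ++ [(x, xh, yh, some (y, some φ))]) =
      TRestrict (versionSpace 𝒯 tr) x xh y φ := by
  simp [versionSpace]

noncomputable def optimalAlg (Φ : Set (X → Bool)) (𝒯 : Set (Teacher X Y Φ))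
    (H : Set (X × Y)) (p₀ : X × Y) : DFFAlg X Y := fun tr x =>
  if h : ∃ p ∈ H ∪ revealed tr, IsSafeExplanation Φ (versionSpace 𝒯 tr) (H ∪ revealed tr) x
      (DFFdim Φ (versionSpace 𝒯 tr) (H ∪ revealed tr)).toNat p
  then h.choose else p₀

variable {p₀ : X × Y}

lemma optimalAlg_mem (hp₀ : p₀ ∈ H) (tr : DFFTranscript X Y) (x : X) :
    optimalAlg Φ 𝒯 H p₀ tr x ∈ H ∪ revealed tr := by
  unfold optimalAlg
  split_ifs with h
  · exact h.choose_spec.1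
  · exact Or.inl hp₀

lemma optimalAlg_legal (hp₀ : p₀ ∈ H) : LegalAlg (optimalAlg Φ 𝒯 H p₀) 𝒯 H :=
  fun _ _ _ _ x => optimalAlg_mem hp₀ _ x

lemma optimalAlg_isSafeExplanation {tr : DFFTranscript X Y} {n : ℕ}
    (hn : DFFdim Φ (versionSpace 𝒯 tr) (H ∪ revealed tr) = n) (x : X) :
    IsSafeExplanation Φ (versionSpace 𝒯 tr) (H ∪ revealed tr) x n
      (optimalAlg Φ 𝒯 H p₀ tr x) := by
  have h := exists_isSafeExplanation hn x
  rw [← ENat.toNat_natCast n, ← hn] at h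
  rw [optimalAlg, dif_pos h, ← ENat.toNat_natCast n, ← hn]
  exact h.choose_spec.2

def RunInvariant (𝒯 : Set (Teacher X Y Φ)) (H : Set (X × Y)) (T : Teacher X Y Φ) (d : ℕ∞)
    (tr : DFFTranscript X Y) : Prop :=
  T ∈ versionSpace 𝒯 tr ∧ ConsistentH T (H ∪ revealed tr) ∧
    DFFdim Φ (versionSpace 𝒯 tr) (H ∪ revealed tr) + dffMistakes tr ≤ d

variable {T : Teacher X Y Φ} {d : ℕ∞} {tr : DFFTranscript X Y}

lemma RunInvariant.step_of_correct {A : DFFAlg X Y} {x : X} (h : RunInvariant 𝒯 H T d tr)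
    (hc : (A tr x).2 = T.label x) : RunInvariant 𝒯 H T d (dffStep A T tr x) := by
  obtain ⟨hT, hTc, hdim⟩ := h
  rw [RunInvariant, dffStep, if_pos hc, versionSpace_append_correct, revealed_append_correct,
    dffMistakes_append_correct, Set.union_insert, consistentH_insert]
  exact ⟨hT, ⟨hc.symm, hTc⟩, le_trans (add_le_add_left (DFFdim_anti (Set.subset_insert _ _)) _)
    hdim⟩

lemma RunInvariant.optimalAlg_step_of_mistake (hd : d ≠ ⊤) {x : X}
    (h : RunInvariant 𝒯 H T d tr) (hc : (optimalAlg Φ 𝒯 H p₀ tr x).2 ≠ T.label x)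
    (hp : optimalAlg Φ 𝒯 H p₀ tr x ∈ H ∪ revealed tr) :
    RunInvariant 𝒯 H T d (dffStep (optimalAlg Φ 𝒯 H p₀) T tr x) := by
  obtain ⟨hT, hTc, hdim⟩ := h
  obtain ⟨n, hn⟩ := ENat.ne_top_iff_exists.mp (ne_top_of_le_ne_top hd (le_self_add.trans hdim))
  obtain ⟨φ, hφ, hfb, -, -⟩ := T.feedback_spec x _ (by rw [hTc _ hp]; exact hc.symm)
  rw [RunInvariant, dffStep_of_ne hc hfb, versionSpace_append_mistake, revealed_append_mistake,
    dffMistakes_append_mistake, Set.union_insert]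
  have hT' : T ∈ TRestrict (versionSpace 𝒯 tr) x (optimalAlg Φ 𝒯 H p₀ tr x).1 (T.label x) φ :=
    ⟨hT, rfl, hfb⟩
  have hTc' : ConsistentH T (insert (x, T.label x) (H ∪ revealed tr)) :=
    consistentH_insert.mpr ⟨rfl, hTc⟩
  have hlt := DFFdim_lt_of_not_shattered (Set.insert_nonempty _ _) ⟨T, hT', hTc'⟩
    (optimalAlg_isSafeExplanation hn.symm x (T.label x) φ (Ne.symm hc) hφ)
  refine ⟨hT', hTc', ?_⟩
  calc _ = _ + 1 + (dffMistakes tr : ℕ∞) := by push_cast; ring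
    _ ≤ n + dffMistakes tr := by gcongr; exact Order.add_one_le_of_lt hlt
    _ ≤ d := hn ▸ hdim

lemma RunInvariant.optimalAlg_run (hp₀ : p₀ ∈ H) (hd : d ≠ ⊤) (h : RunInvariant 𝒯 H T d tr)
    (xs : List X) : RunInvariant 𝒯 H T d (xs.foldl (dffStep (optimalAlg Φ 𝒯 H p₀) T) tr) := by
  induction xs generalizing tr with
  | nil => exact h
  | cons x xs ih =>
    refine ih ?_
    by_cases hc : (optimalAlg Φ 𝒯 H p₀ tr x).2 = T.label x
    · exact h.step_of_correct hc
    · exact h.optimalAlg_step_of_mistake hd hc (optimalAlg_mem hp₀ tr x)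

lemma MBound_optimalAlg_le (hp₀ : p₀ ∈ H) : MBound (optimalAlg Φ 𝒯 H p₀) 𝒯 H ≤ DFFdim Φ 𝒯 H := by
  rcases eq_or_ne (DFFdim Φ 𝒯 H) ⊤ with htop | hfin
  · exact htop ▸ le_top
  refine sSup_le fun _ ⟨T, hT, hTc, xs, hm⟩ => hm ▸ ?_
  have hinit : RunInvariant 𝒯 H T (DFFdim Φ 𝒯 H) [] :=
    ⟨hT, by simpa using hTc, by simp [dffMistakes]⟩
  exact le_add_self.trans (hinit.optimalAlg_run hp₀ hfin xs).2.2

end OptimalAlgorithm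

theorem dff_optimal_mistake_bound_eq_DFFdim_general {X Y : Type}
    (Φ : Set (X → Bool)) (𝒯 : Set (Teacher X Y Φ)) (H : Set (X × Y))
    (hH : H.Nonempty) :
    sInf {m : ℕ∞ | ∃ A : DFFAlg X Y, LegalAlg A 𝒯 H ∧ m = MBound A 𝒯 H} =
      DFFdim Φ 𝒯 H := by
  obtain ⟨p₀, hp₀⟩ := hH
  refine le_antisymm ?_ ?_
  · exact sInf_le_of_le ⟨optimalAlg Φ 𝒯 H p₀, optimalAlg_legal hp₀, rfl⟩
      (MBound_optimalAlg_le hp₀)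
  · exact le_sInf fun _ ⟨A, hA, hm⟩ => hm ▸ DFFdim_le_MBound ⟨p₀, hp₀⟩ hA

/-- **Theorem (realizable DFF mistake bound).** Let `𝒯` be a teacher class
over `(X, Y, Φ)` (with `Y` a finite label set) and let `H` be a nonempty
history consistent with `𝒯`.  Then the minimum, over all deterministic DFF
algorithms (legal for `(𝒯, H)`), of the worst-case mistake bound
`M(𝒜, 𝒯, H)` equals `DFFdim(𝒯, H)`. -/
theorem dff_optimal_mistake_bound_eq_DFFdim {X Y : Type} [Finite Y]
    (Φ : Set (X → Bool)) (𝒯 : Set (Teacher X Y Φ)) (H : Set (X × Y))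
    (hH : H.Nonempty) (hcons : ∃ T ∈ 𝒯, ConsistentH T H) :
    sInf {m : ℕ∞ | ∃ A : DFFAlg X Y, LegalAlg A 𝒯 H ∧ m = MBound A 𝒯 H} =
      DFFdim Φ 𝒯 H :=
  dff_optimal_mistake_bound_eq_DFFdim_general Φ 𝒯 H hH
end

section
/- Let L, R, M ∈ ℕ, let X be any set of examples and Φ ⊆ {0,1}^X any set of Boolean features closed under negation, and let 𝒯 be the relaxed component model teacher class with parameters (L,R,M) over (X, Y = {0,…,L}, Φ). Let H = {(x_0,0)} for some x_0 ∈ X such that 𝒯 is consistent with H. Then DFFdim(𝒯,H) ≤ R·M. -/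
open scoped Classical

/-- `x` satisfies the conjunction given by a finite set `S` of features. -/
def SatAll {X : Type} (S : Finset (X → Bool)) (x : X) : Prop :=
  ∀ φ ∈ S, φ x = true

/-- Negation of a Boolean feature. -/
def negF {X : Type} (φ : X → Bool) : X → Bool := fun z => !(φ z)

/-- The data of a relaxed component model with parameters `(L, R, M)`: a
collection of (at most) `R` subsets of `Φ`, each of size at most `M`, together
with a nonzero label for each of them. -/
structure RCMData (X : Type) (Φ : Set (X → Bool)) (L R M : ℕ) where
  S : Fin R → Finset (X → Bool)
  q : Fin R → Fin (L + 1)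
  hSΦ : ∀ j, ↑(S j) ⊆ Φ
  hSM : ∀ j, (S j).card ≤ M
  hq : ∀ j, q j ≠ 0

/-- `ℓ` is the labeling function of the relaxed component model data `D`:
an example satisfying a conjunction `S j` is labeled `q j` (in particular at
most one label may arise this way), and an example satisfying no conjunction
is labeled `0`. -/
def IsRCMLabel {X : Type} {Φ : Set (X → Bool)} {L R M : ℕ}
    (D : RCMData X Φ L R M) (ℓ : X → Fin (L + 1)) : Prop :=
  ∀ x : X, (∀ j, SatAll (D.S j) x → ℓ x = D.q j) ∧
    ((∀ j, ¬ SatAll (D.S j) x) → ℓ x = 0)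

/-- `Pm` is a primary-conjunction map for `D` with labeling `ℓ`: every example
with a nonzero label is assigned a conjunction it satisfies, carrying its
label. -/
def IsPrimaryMap {X : Type} {Φ : Set (X → Bool)} {L R M : ℕ}
    (D : RCMData X Φ L R M) (ℓ : X → Fin (L + 1)) (Pm : X → Fin R) : Prop :=
  ∀ x : X, ℓ x ≠ 0 → SatAll (D.S (Pm x)) x ∧ D.q (Pm x) = ℓ x

/-- The feature feedback `ψ` is allowed for `(D, ℓ, Pm)`: whenever
`ℓ x ≠ ℓ xh`, if `ℓ xh ≠ 0` then `ψ x xh ∈ F(x) ∩ ¬S(xh)`, and otherwise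
`ψ x xh ∈ S(x) ∩ ¬F(xh)`, where `F(z) = {φ ∈ Φ | φ z}` and
`¬A = {¬φ | φ ∈ A}`. -/
def RCMFeedbackOK {X : Type} {Φ : Set (X → Bool)} {L R M : ℕ}
    (D : RCMData X Φ L R M) (ℓ : X → Fin (L + 1)) (Pm : X → Fin R)
    (ψ : X → X → Option (X → Bool)) : Prop :=
  ∀ x xh : X, ℓ x ≠ ℓ xh → ∃ φ : X → Bool, ψ x xh = some φ ∧
    (if ℓ xh ≠ 0 then
      (φ ∈ Φ ∧ φ x = true) ∧ ∃ φ₀ ∈ D.S (Pm xh), φ = negF φ₀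
    else
      φ ∈ D.S (Pm x) ∧ ∃ φ₀ : X → Bool, φ₀ ∈ Φ ∧ φ₀ xh = true ∧ φ = negF φ₀)

/-- The relaxed component model teacher class with parameters `(L, R, M)`
over `(X, {0, …, L}, Φ)`. -/
def RCMClass (X : Type) (Φ : Set (X → Bool)) (L R M : ℕ) :
    Set (Teacher X (Fin (L + 1)) Φ) :=
  {T | ∃ (D : RCMData X Φ L R M) (Pm : X → Fin R),
    IsRCMLabel D T.label ∧ IsPrimaryMap D T.label Pm ∧
    RCMFeedbackOK D T.label Pm T.feedback}

/-!
Follow one root-to-leaf path of a shattered tree and record along it pairs `(a, φ)`, where `a`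
is an example already labelled nonzero and `φ` is a feature that every teacher consistent with
the path must put into the primary conjunction of `a`; distinct recorded anchors are forced to
have distinct primary conjunctions, so at most `R · M` pairs can ever be recorded. At a node
presenting `x`, some branch records a new pair. If some anchor `a` has all its recorded features
true at `x`, take the branch of the explanation pair `(a, y_a)`: the feedback `φ` holds at `x`
and `¬φ ∈ S(a)`, so `¬φ`, false at `x`, is new for `a`. Otherwise every anchor has a recorded
feature false at `x`, so the primary conjunction of `x`, which `x` satisfies, is none of theirs;
take the branch of `(x₀, 0)`: the feedback lies in `S(x)`, and `x` becomes a new anchor.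
-/

section RCM

variable {X : Type} {Φ : Set (X → Bool)} {L R M : ℕ}

theorem ConsistentH.mono_s4 {Y : Type} {T : Teacher X Y Φ} {H H' : Set (X × Y)} (hHH' : H ⊆ H')
    (hT : ConsistentH T H') : ConsistentH T H :=
  fun p hp => hT p (hHH' hp)

def IsRCMWitness (D : RCMData X Φ L R M) (Pm : X → Fin R) (T : Teacher X (Fin (L + 1)) Φ) :
    Prop :=
  IsRCMLabel D T.label ∧ IsPrimaryMap D T.label Pm ∧ RCMFeedbackOK D T.label Pm T.feedback

namespace IsRCMWitness

variable {D : RCMData X Φ L R M} {Pm : X → Fin R} {T : Teacher X (Fin (L + 1)) Φ}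

theorem feedback_of_label_ne_zero (hW : IsRCMWitness D Pm T) {x xh : X} {φ : X → Bool}
    (hne : T.label x ≠ T.label xh) (hxh : T.label xh ≠ 0) (hφ : T.feedback x xh = some φ) :
    φ x = true ∧ negF φ ∈ D.S (Pm xh) := by
  obtain ⟨φ', hφ', hspec⟩ := hW.2.2 x xh hne
  obtain rfl : φ' = φ := Option.some.inj (hφ'.symm.trans hφ)
  rw [if_pos hxh] at hspec
  obtain ⟨⟨-, hφx⟩, φ₀, hφ₀, rfl⟩ := hspec
  refine ⟨hφx, ?_⟩
  convert hφ₀ using 1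
  funext z
  simp [negF]

theorem feedback_of_label_eq_zero (hW : IsRCMWitness D Pm T) {x xh : X} {φ : X → Bool}
    (hne : T.label x ≠ T.label xh) (hxh : T.label xh = 0) (hφ : T.feedback x xh = some φ) :
    φ ∈ D.S (Pm x) := by
  obtain ⟨φ', hφ', hspec⟩ := hW.2.2 x xh hne
  obtain rfl : φ' = φ := Option.some.inj (hφ'.symm.trans hφ)
  rw [if_neg (not_not.mpr hxh)] at hspec
  exact hspec.1

theorem satAll_primary (hW : IsRCMWitness D Pm T) {x : X} (hx : T.label x ≠ 0) :
    SatAll (D.S (Pm x)) x :=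
  (hW.2.1 x hx).1

end IsRCMWitness

def IsPrimaryFeatureList (D : RCMData X Φ L R M) (Pm : X → Fin R)
    (C : List (X × (X → Bool))) : Prop :=
  C.Nodup ∧ (∀ e ∈ C, e.2 ∈ D.S (Pm e.1)) ∧
    ∀ e ∈ C, ∀ e' ∈ C, Pm e.1 = Pm e'.1 → e.1 = e'.1

namespace IsPrimaryFeatureList

variable {D : RCMData X Φ L R M} {Pm : X → Fin R} {C : List (X × (X → Bool))}

theorem nil : IsPrimaryFeatureList D Pm [] := by
  simp [IsPrimaryFeatureList]

theorem cons (hC : IsPrimaryFeatureList D Pm C) {a : X} {φ : X → Bool} (hnew : (a, φ) ∉ C)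
    (hφ : φ ∈ D.S (Pm a)) (hanchor : ∀ e ∈ C, Pm e.1 = Pm a → e.1 = a) :
    IsPrimaryFeatureList D Pm ((a, φ) :: C) := by
  obtain ⟨hnodup, hmem, hinj⟩ := hC
  refine ⟨List.nodup_cons.mpr ⟨hnew, hnodup⟩, ?_, ?_⟩
  · simpa only [List.mem_cons, forall_eq_or_imp] using ⟨hφ, hmem⟩
  · simp only [List.mem_cons]
    rintro e (rfl | he) e' (rfl | he') hPm
    · rfl
    · exact (hanchor e' he' hPm.symm).symm
    · exact hanchor e he hPm
    · exact hinj e he e' he' hPm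

theorem length_le (hC : IsPrimaryFeatureList D Pm C) : C.length ≤ R * M := by
  obtain ⟨hnodup, hmem, hinj⟩ := hC
  let f : X × (X → Bool) → Σ _ : Fin R, X → Bool := fun e => ⟨Pm e.1, e.2⟩
  have hf : Set.InjOn f C.toFinset := by
    rintro e he e' he' hee'
    simp only [List.coe_toFinset, Set.mem_ofPred_eq] at he he'
    simp only [f, Sigma.mk.injEq] at hee'
    exact Prod.ext (hinj e he e' he' hee'.1) (eq_of_heq hee'.2)
  calc C.length = C.toFinset.card := (List.toFinset_card_of_nodup hnodup).symm
    _ ≤ (Finset.univ.sigma D.S).card :=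
        Finset.card_le_card_of_injOn f
          (fun e he => by simpa [f] using hmem e (List.mem_toFinset.mp he)) hf
    _ = ∑ j, (D.S j).card := Finset.card_sigma _ _
    _ ≤ ∑ _j : Fin R, M := Finset.sum_le_sum fun j _ => D.hSM j
    _ = R * M := by simp

end IsPrimaryFeatureList

def IsForcedFeatureList (R M : ℕ) (𝒯 : Set (Teacher X (Fin (L + 1)) Φ))
    (H : Set (X × Fin (L + 1))) (C : List (X × (X → Bool))) : Prop :=
  (∀ e ∈ C, ∃ y ≠ 0, (e.1, y) ∈ H) ∧
  ∀ T ∈ 𝒯, ConsistentH T H → ∀ (D : RCMData X Φ L R M) Pm, IsRCMWitness D Pm T →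
    IsPrimaryFeatureList D Pm C

theorem IsForcedFeatureList.nil (R M : ℕ) (𝒯 : Set (Teacher X (Fin (L + 1)) Φ))
    (H : Set (X × Fin (L + 1))) : IsForcedFeatureList R M 𝒯 H [] :=
  ⟨by simp, fun _ _ _ _ _ _ => IsPrimaryFeatureList.nil⟩

variable {𝒯 : Set (Teacher X (Fin (L + 1)) Φ)} {H : Set (X × Fin (L + 1))}
  {C : List (X × (X → Bool))} {x : X} {y : Fin (L + 1)} {φ : X → Bool}

theorem IsForcedFeatureList.anchors_insert (hC : IsForcedFeatureList R M 𝒯 H C)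
    {p : X × Fin (L + 1)} : ∀ e ∈ C, ∃ y ≠ 0, (e.1, y) ∈ insert p H :=
  fun e he => (hC.1 e he).imp fun _ => And.imp_right (Set.mem_insert_of_mem p)

theorem IsForcedFeatureList.cons_of_anchor (hC : IsForcedFeatureList R M 𝒯 H C)
    {a : X} {φa : X → Bool} (ha : (a, φa) ∈ C) {ya : Fin (L + 1)} (haH : (a, ya) ∈ H)
    (hya : ya ≠ 0) (hy : y ≠ ya) (htrue : ∀ e ∈ C, e.1 = a → e.2 x = true) :
    IsForcedFeatureList R M (TRestrict 𝒯 x a y φ) (insert (x, y) H) ((a, negF φ) :: C) := by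
  refine ⟨List.forall_mem_cons.mpr
    ⟨⟨ya, hya, Set.mem_insert_of_mem _ haH⟩, hC.anchors_insert⟩, ?_⟩
  rintro T hT hcons D Pm hW
  have hH := hcons.mono_s4 (Set.subset_insert _ _)
  have hla : T.label a = ya := hH _ haH
  obtain ⟨hφx, hφS⟩ := hW.feedback_of_label_ne_zero (by rw [hT.2.1, hla]; exact hy)
    (by rwa [hla]) hT.2.2
  have hold := hC.2 T hT.1 hH D Pm hW
  refine hold.cons (fun hmem => ?_) hφS fun e he hPm => hold.2.2 e he _ ha hPm
  have := htrue _ hmem rfl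
  simp [negF, hφx] at this

theorem IsForcedFeatureList.cons_of_separated (hC : IsForcedFeatureList R M 𝒯 H C)
    {x₀ : X} (hx₀ : (x₀, 0) ∈ H) (hy : y ≠ 0)
    (hsep : ∀ e ∈ C, ∃ e' ∈ C, e'.1 = e.1 ∧ e'.2 x = false) :
    IsForcedFeatureList R M (TRestrict 𝒯 x x₀ y φ) (insert (x, y) H) ((x, φ) :: C) := by
  refine ⟨List.forall_mem_cons.mpr ⟨⟨y, hy, Set.mem_insert _ _⟩, hC.anchors_insert⟩, ?_⟩
  rintro T hT hcons D Pm hW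
  have hH := hcons.mono_s4 (Set.subset_insert _ _)
  have hlx : T.label x ≠ 0 := hT.2.1 ▸ hy
  have hφS := hW.feedback_of_label_eq_zero (by rw [hH _ hx₀]; exact hlx) (hH _ hx₀) hT.2.2
  have hold := hC.2 T hT.1 hH D Pm hW
  have hPm : ∀ e ∈ C, Pm e.1 ≠ Pm x := by
    intro e he hPm
    obtain ⟨e', he', he'e, hfalse⟩ := hsep e he
    have hS := hold.2.1 e' he'
    rw [he'e, hPm] at hS
    simp [hW.satAll_primary hlx _ hS] at hfalse
  exact hold.cons (fun hmem => hPm _ hmem rfl) hφS fun e he h => absurd h (hPm e he)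

theorem IsForcedFeatureList.exists_cons {ymap : X × Fin (L + 1) → Fin (L + 1)}
    {φmap : X × Fin (L + 1) → X → Bool} (hC : IsForcedFeatureList R M 𝒯 H C) {x₀ : X}
    (hx₀ : (x₀, 0) ∈ H) (hne : ∀ p ∈ H, ymap p ≠ p.2) :
    ∃ p ∈ H, ∃ e, IsForcedFeatureList R M (TRestrict 𝒯 x p.1 (ymap p) (φmap p))
      (insert (x, ymap p) H) (e :: C) := by
  by_cases hB : ∃ e ∈ C, ∀ e' ∈ C, e'.1 = e.1 → e'.2 x = true
  · obtain ⟨⟨a, φa⟩, ha, htrue⟩ := hB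
    obtain ⟨ya, hya, haH⟩ := hC.1 _ ha
    exact ⟨(a, ya), haH, _, hC.cons_of_anchor ha haH hya (hne _ haH) htrue⟩
  · push Not at hB
    exact ⟨(x₀, 0), hx₀, _, hC.cons_of_separated hx₀ (hne _ hx₀) (by simpa using hB)⟩

theorem ShatteredDFFT.height_add_length_le {n : ℕ} (hsh : ShatteredDFFT Φ 𝒯 H n)
    (h𝒯 : 𝒯 ⊆ RCMClass X Φ L R M) {x₀ : X} (hx₀ : (x₀, 0) ∈ H)
    (hC : IsForcedFeatureList R M 𝒯 H C) : n + C.length ≤ R * M := by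
  induction hsh generalizing C with
  | leaf 𝒯 H hex =>
    obtain ⟨T, hT, hcons⟩ := hex
    obtain ⟨D, Pm, hW⟩ := h𝒯 hT
    simpa using (hC.2 T hT hcons D Pm hW).length_le
  | node 𝒯 H d x ymap φmap hne _ _ ih =>
    obtain ⟨p, hp, e, he⟩ := hC.exists_cons (x := x) (φmap := φmap) hx₀ hne
    have := ih p hp (fun T hT => h𝒯 hT.1) (Set.mem_insert_of_mem _ hx₀) he
    simp only [List.length_cons] at this
    omega

end RCM

theorem DFFdim_RCM_le_general {X : Type} (Φ : Set (X → Bool))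
    (L R M : ℕ) (x₀ : X) :
    DFFdim Φ (RCMClass X Φ L R M) {((x₀ : X), (0 : Fin (L + 1)))} ≤
      ((R * M : ℕ) : ℕ∞) := by
  refine sSup_le ?_
  rintro _ ⟨n, rfl, hsh⟩
  have := hsh.height_add_length_le subset_rfl (Set.mem_singleton _)
    (IsForcedFeatureList.nil R M _ _)
  exact_mod_cast this

/-- **Theorem (upper bound for the relaxed component model).** Let
`L, R, M ∈ ℕ`, let `X` be any set of examples and `Φ` any set of Boolean
features on `X` closed under negation, and let `𝒯` be the relaxed component
model teacher class with parameters `(L, R, M)` over `(X, {0, …, L}, Φ)`.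
If `H = {(x₀, 0)}` for some `x₀ ∈ X` such that `𝒯` is consistent with `H`,
then `DFFdim(𝒯, H) ≤ R · M`. -/
theorem DFFdim_RCM_le {X : Type} (Φ : Set (X → Bool))
    (hneg : ∀ φ ∈ Φ, negF φ ∈ Φ) (L R M : ℕ) (x₀ : X)
    (hcons : ∃ T ∈ RCMClass X Φ L R M,
      ConsistentH T {((x₀ : X), (0 : Fin (L + 1)))}) :
    DFFdim Φ (RCMClass X Φ L R M) {((x₀ : X), (0 : Fin (L + 1)))} ≤
      ((R * M : ℕ) : ℕ∞) :=
  DFFdim_RCM_le_general Φ L R M x₀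
end

section
/- Let (X,Φ) be the natural feature construction, let the label set be Y = {0,1} (i.e., L = 1), and let H = {(0̄,0)}. Given R, M ∈ ℕ, let 𝒯 be the relaxed component model teacher class with parameters (L=1,R,M) over (X,Y,Φ). Then DFFdim(𝒯,H) = R·M. -/
open scoped Classical

/-- The natural feature construction: examples are infinite Boolean sequences
and the features are the coordinate projections and their negations. -/
def PhiNat : Set ((ℕ → Bool) → Bool) :=
  {φ | ∃ n : ℕ, φ = fun x => x n} ∪ {φ | ∃ n : ℕ, φ = fun x => !(x n)}

/-!
Upper bound: call `(a, g)` certified if `(a, 1)` lies in the history and `g` belongs to the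
primary conjunction of `a` for every consistent teacher and every presentation of it. Each
round of a shattered tree has a branch certifying one more pair. If for some certified anchor
`a` the feature `φ` answered to the explanation `(a, 1)` gives a new pair `(a, ¬φ)`, take that
branch. Otherwise every anchor has a certified feature that is false at the new example `x`,
so in the branch explained by `(0̄, 0)` the example `x` becomes an anchor whose primary
conjunction differs from those of all earlier anchors. Certified pairs inject into the disjoint
union of the `R` conjunctions, hence there are at most `R * M` of them.

Lower bound: coordinate `Nat.pair c i` lies in block `c`, and block `c < R` gets the `M` rounds
`t` with `t / M = c`. The example of round `t` is true exactly on its block except for its hole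
`Nat.pair (t / M) (t + 1)`. Every explanation is answered with the opposite label and the
literal of the least coordinate separating the two examples. For any labelling `b` of the
rounds, let the conjunction of block `c` consist of the base `Nat.pair c 0` (if some round of
the block is labelled `1`) and the holes of its rounds labelled `0`. The teacher that explains by
the least falsified coordinate of a conjunction then gives exactly these answers.
-/

section ShatteredDFFT

variable {X Y : Type} {Φ : Set (X → Bool)}

theorem Teacher.apply_of_feedback_eq_some {T : Teacher X Y Φ} {x xh : X} {φ : X → Bool}
    (hne : T.label x ≠ T.label xh) (hφ : T.feedback x xh = some φ) :
    φ x = true ∧ φ xh = false := by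
  obtain ⟨φ', -, hφ', hx, hxh⟩ := T.feedback_spec x xh hne
  obtain rfl : φ = φ' := Option.some_injective _ (hφ.symm.trans hφ')
  exact ⟨hx, hxh⟩

theorem ShatteredDFFT.exists_consistent_s5 {𝒯 : Set (Teacher X Y Φ)} {H : Set (X × Y)} {d : ℕ}
    (hs : ShatteredDFFT Φ 𝒯 H d) (hH : H.Nonempty) : ∃ T ∈ 𝒯, ConsistentH T H := by
  induction hs with
  | leaf _ _ h => exact h
  | node _ _ _ x y _ _ _ _ ih =>
    obtain ⟨p, hp⟩ := hH
    obtain ⟨T, hT, hcons⟩ := ih p hp ⟨_, Set.mem_insert _ _⟩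
    exact ⟨T, hT.1, fun q hq => hcons q (Set.mem_insert_of_mem _ hq)⟩

def roundHistory (H₀ : Set (X × Y)) (ex : ℕ → X) (b : ℕ → Y) (t : ℕ) : Set (X × Y) :=
  H₀ ∪ {p | ∃ s < t, p = (ex s, b s)}

theorem roundHistory_congr {H₀ : Set (X × Y)} {ex : ℕ → X} {b b' : ℕ → Y} {t : ℕ}
    (h : ∀ s < t, b s = b' s) : roundHistory H₀ ex b t = roundHistory H₀ ex b' t := by
  ext p
  simp only [roundHistory, Set.mem_union, Set.mem_ofPred_eq]
  refine or_congr_right ⟨?_, ?_⟩ <;> rintro ⟨s, hs, rfl⟩ <;> exact ⟨s, hs, by rw [h s hs]⟩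

theorem roundHistory_succ_update (H₀ : Set (X × Y)) (ex : ℕ → X) (b : ℕ → Y) (t : ℕ) (y : Y) :
    roundHistory H₀ ex (Function.update b t y) (t + 1) =
      insert (ex t, y) (roundHistory H₀ ex b t) := by
  ext p
  simp only [roundHistory, Set.mem_union, Set.mem_ofPred_eq, Set.mem_insert_iff]
  constructor
  · rintro (hp | ⟨s, hs, rfl⟩)
    · exact Or.inr (Or.inl hp)
    · rcases (Nat.lt_succ_iff_lt_or_eq.1 hs) with hs | rfl
      · exact Or.inr (Or.inr ⟨s, hs, by rw [Function.update_of_ne hs.ne]⟩)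
      · exact Or.inl (by rw [Function.update_self])
  · rintro (rfl | hp | ⟨s, hs, rfl⟩)
    · exact Or.inr ⟨t, t.lt_succ_self, by rw [Function.update_self]⟩
    · exact Or.inl hp
    · exact Or.inr ⟨s, hs.trans t.lt_succ_self, by rw [Function.update_of_ne hs.ne]⟩

def Realizes (T : Teacher X Y Φ) (H₀ : Set (X × Y)) (ex : ℕ → X) (ans : ℕ → X × Y → Y)
    (fb : ℕ → X × Y → X → Bool) (b : ℕ → Y) (n : ℕ) : Prop :=
  ∀ t < n, T.label (ex t) = b t ∧
    ∀ p ∈ roundHistory H₀ ex b t, ans t p = b t → T.feedback (ex t) p.1 = some (fb t p)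

theorem shatteredDFFT_of_forall_realizes [Nonempty Y] (𝒯 : Set (Teacher X Y Φ))
    (H₀ : Set (X × Y)) (ex : ℕ → X) (ans : ℕ → X × Y → Y) (fb : ℕ → X × Y → X → Bool) (n : ℕ)
    (hans : ∀ t p, ans t p ≠ p.2) (hfb : ∀ t p, fb t p ∈ Φ)
    (hreal : ∀ b, ∃ T ∈ 𝒯, ConsistentH T H₀ ∧ Realizes T H₀ ex ans fb b n) :
    ShatteredDFFT Φ 𝒯 H₀ n := by
  suffices key : ∀ k t (b : ℕ → Y) (𝒯' : Set (Teacher X Y Φ)), t + k = n →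
      (∀ T ∈ 𝒯, ConsistentH T H₀ → Realizes T H₀ ex ans fb b t → T ∈ 𝒯') →
      ShatteredDFFT Φ 𝒯' (roundHistory H₀ ex b t) k by
    have := key n 0 (fun _ => Classical.arbitrary Y) 𝒯 (zero_add n) fun T hT _ _ => hT
    simpa [roundHistory] using this
  intro k
  induction k with
  | zero =>
    intro t b 𝒯' htn h𝒯'
    obtain ⟨T, hT, hH₀, hreal⟩ := hreal b
    refine .leaf _ _ ⟨T, h𝒯' T hT hH₀ fun s hs => hreal s (by omega), ?_⟩
    rintro p (hp | ⟨s, hs, rfl⟩)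
    · exact hH₀ p hp
    · exact (hreal s (by omega)).1
  | succ k ih =>
    intro t b 𝒯' htn h𝒯'
    refine .node _ _ k (ex t) (ans t) (fb t) (fun p _ => hans t p) (fun p _ => hfb t p) ?_
    intro p hp
    rw [← roundHistory_succ_update]
    refine ih (t + 1) _ _ (by omega) fun T hT hH₀ hreal => ?_
    have hagree : ∀ s < t, Function.update b t (ans t p) s = b s :=
      fun s hs => Function.update_of_ne hs.ne _ _
    obtain ⟨hlabel, hfeedback⟩ := hreal t t.lt_succ_self
    rw [Function.update_self] at hlabel hfeedback
    rw [roundHistory_congr hagree] at hfeedback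
    refine ⟨h𝒯' T hT hH₀ fun s hs => ?_, hlabel, hfeedback p hp rfl⟩
    obtain ⟨hlabel', hfeedback'⟩ := hreal s (by omega)
    rw [hagree s hs] at hlabel' hfeedback'
    rw [roundHistory_congr fun r hr => hagree r (hr.trans hs)] at hfeedback'
    exact ⟨hlabel', hfeedback'⟩

end ShatteredDFFT

theorem negF_negF {X : Type} (φ : X → Bool) : negF (negF φ) = φ := by
  funext z
  simp [negF]

section RCM

variable {X : Type} {Φ : Set (X → Bool)} {L R M : ℕ}

def IsRCMPresentation (D : RCMData X Φ L R M) (Pm : X → Fin R)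
    (T : Teacher X (Fin (L + 1)) Φ) : Prop :=
  IsRCMLabel D T.label ∧ IsPrimaryMap D T.label Pm ∧ RCMFeedbackOK D T.label Pm T.feedback

theorem RCMFeedbackOK.negF_mem {D : RCMData X Φ L R M} {ℓ : X → Fin (L + 1)} {Pm : X → Fin R}
    {ψ : X → X → Option (X → Bool)} (h : RCMFeedbackOK D ℓ Pm ψ) {x xh : X} {φ : X → Bool}
    (hne : ℓ x ≠ ℓ xh) (hxh : ℓ xh ≠ 0) (hψ : ψ x xh = some φ) : negF φ ∈ D.S (Pm xh) := by
  obtain ⟨φ', hψ', hφ'⟩ := h x xh hne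
  rw [if_pos hxh] at hφ'
  obtain ⟨φ₀, hφ₀, rfl⟩ := hφ'.2
  rw [hψ, Option.some_inj] at hψ'
  rwa [hψ', negF_negF]

theorem RCMFeedbackOK.mem {D : RCMData X Φ L R M} {ℓ : X → Fin (L + 1)} {Pm : X → Fin R}
    {ψ : X → X → Option (X → Bool)} (h : RCMFeedbackOK D ℓ Pm ψ) {x xh : X} {φ : X → Bool}
    (hne : ℓ x ≠ ℓ xh) (hxh : ℓ xh = 0) (hψ : ψ x xh = some φ) : φ ∈ D.S (Pm x) := by
  obtain ⟨φ', hψ', hφ'⟩ := h x xh hne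
  rw [if_neg (not_not_intro hxh)] at hφ'
  rw [hψ, Option.some_inj] at hψ'
  exact hψ' ▸ hφ'.1

theorem RCMFeedbackOK.feedback_spec {D : RCMData X Φ L R M} {ℓ : X → Fin (L + 1)}
    {Pm : X → Fin R} {ψ : X → X → Option (X → Bool)} (h : RCMFeedbackOK D ℓ Pm ψ)
    (hPm : IsPrimaryMap D ℓ Pm) (x xh : X) (hne : ℓ x ≠ ℓ xh) :
    ∃ φ ∈ Φ, ψ x xh = some φ ∧ φ x = true ∧ φ xh = false := by
  obtain ⟨φ, hψ, hφ⟩ := h x xh hne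
  split_ifs at hφ with hxh
  · obtain ⟨⟨hΦ, hx⟩, φ₀, hφ₀, rfl⟩ := hφ
    refine ⟨_, hΦ, hψ, hx, ?_⟩
    simp [negF, (hPm xh hxh).1 φ₀ hφ₀]
  · obtain ⟨hφS, φ₀, -, hφ₀, rfl⟩ := hφ
    refine ⟨_, D.hSΦ _ hφS, hψ, (hPm x fun h0 => hne (h0.trans (not_not.1 hxh).symm)).1 _ hφS, ?_⟩
    simp [negF, hφ₀]

end RCM

section UpperBound

variable {X : Type} {Φ : Set (X → Bool)} {L R M : ℕ}

def Certifies (D : RCMData X Φ L R M) (Pm : X → Fin R) (P : Finset (X × (X → Bool))) : Prop :=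
  (∀ e ∈ P, e.2 ∈ D.S (Pm e.1)) ∧ ∀ e ∈ P, ∀ e' ∈ P, Pm e.1 = Pm e'.1 → e.1 = e'.1

theorem Certifies.card_le {D : RCMData X Φ L R M} {Pm : X → Fin R}
    {P : Finset (X × (X → Bool))} (h : Certifies D Pm P) : P.card ≤ R * M :=
  calc P.card ≤ (Finset.univ.sigma D.S).card := by
        refine Finset.card_le_card_of_injOn (fun e => ⟨Pm e.1, e.2⟩)
          (fun e he => by simpa using h.1 e he) fun e he e' he' hee' => ?_
        simp only [Sigma.mk.inj_iff, heq_eq_eq] at hee'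
        exact Prod.ext (h.2 e he e' he' hee'.1) hee'.2
    _ = ∑ j, (D.S j).card := Finset.card_sigma _ _
    _ ≤ ∑ _j : Fin R, M := Finset.sum_le_sum fun j _ => D.hSM j
    _ = R * M := by simp

theorem Certifies.insert {D : RCMData X Φ L R M} {Pm : X → Fin R}
    {P : Finset (X × (X → Bool))} (h : Certifies D Pm P) {a : X} {g : X → Bool}
    (hg : g ∈ D.S (Pm a)) (ha : ∀ e ∈ P, Pm a = Pm e.1 → a = e.1) :
    Certifies D Pm (insert (a, g) P) := by
  refine ⟨Finset.forall_mem_insert _ _ _ |>.2 ⟨hg, h.1⟩, ?_⟩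
  intro e he e' he' hPm
  rw [Finset.mem_insert] at he he'
  rcases he with rfl | he <;> rcases he' with rfl | he'
  · rfl
  · exact ha e' he' hPm
  · exact (ha e he hPm.symm).symm
  · exact h.2 e he e' he' hPm

structure Certified (R M : ℕ) (x₀ : X) (𝒯 : Set (Teacher X (Fin 2) Φ))
    (H : Set (X × Fin 2)) (P : Finset (X × (X → Bool))) : Prop where
  subset : 𝒯 ⊆ RCMClass X Φ 1 R M
  root : (x₀, 0) ∈ H
  anchor : ∀ e ∈ P, (e.1, 1) ∈ H
  certifies : ∀ T ∈ 𝒯, ConsistentH T H →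
    ∀ (D : RCMData X Φ 1 R M) Pm, IsRCMPresentation D Pm T → Certifies D Pm P

variable {x₀ : X} {𝒯 : Set (Teacher X (Fin 2) Φ)} {H : Set (X × Fin 2)}
  {P : Finset (X × (X → Bool))}

theorem Certified.insert_feature (hc : Certified R M x₀ 𝒯 H P) {e : X × (X → Bool)} (he : e ∈ P)
    (x : X) (φ : X → Bool) :
    Certified R M x₀ (TRestrict 𝒯 x e.1 0 φ) (insert (x, 0) H) (insert (e.1, negF φ) P) where
  subset _ hT := hc.subset hT.1
  root := Set.mem_insert_of_mem _ hc.root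
  anchor := Finset.forall_mem_insert _ _ _ |>.2
    ⟨Set.mem_insert_of_mem _ (hc.anchor e he),
      fun e' he' => Set.mem_insert_of_mem _ (hc.anchor e' he')⟩
  certifies T hT hcons D Pm hpres := by
    have hP := hc.certifies T hT.1 (fun q hq => hcons q (Set.mem_insert_of_mem _ hq)) D Pm hpres
    have hla : T.label e.1 = 1 := hcons _ (Set.mem_insert_of_mem _ (hc.anchor e he))
    refine hP.insert (hpres.2.2.negF_mem ?_ (by rw [hla]; decide) hT.2.2)
      fun e' he' => hP.2 e he e' he'
    rw [hT.2.1, hla]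
    decide

theorem Certified.insert_anchor (hc : Certified R M x₀ 𝒯 H P) {x : X} (β : X → Bool)
    (hsep : ∀ e ∈ P, ∃ γ, (e.1, γ) ∈ P ∧ γ x = false) :
    Certified R M x₀ (TRestrict 𝒯 x x₀ 1 β) (insert (x, 1) H) (insert (x, β) P) where
  subset _ hT := hc.subset hT.1
  root := Set.mem_insert_of_mem _ hc.root
  anchor := Finset.forall_mem_insert _ _ _ |>.2
    ⟨Set.mem_insert _ _, fun e' he' => Set.mem_insert_of_mem _ (hc.anchor e' he')⟩
  certifies T hT hcons D Pm hpres := by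
    have hP := hc.certifies T hT.1 (fun q hq => hcons q (Set.mem_insert_of_mem _ hq)) D Pm hpres
    have hl0 : T.label x₀ = 0 := hcons _ (Set.mem_insert_of_mem _ hc.root)
    have hlx : T.label x = 1 := hT.2.1
    refine hP.insert (hpres.2.2.mem (by rw [hlx, hl0]; decide) hl0 hT.2.2) fun e he hPm => ?_
    obtain ⟨γ, hγP, hγx⟩ := hsep e he
    have hsat := (hpres.2.1 x (by rw [hlx]; decide)).1
    have hγ : γ ∈ D.S (Pm x) := hPm ▸ hP.1 _ hγP
    simp [hsat γ hγ] at hγx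

theorem Certified.exists_branch (hc : Certified R M x₀ 𝒯 H P) {d : ℕ}
    (hs : ShatteredDFFT Φ 𝒯 H (d + 1)) :
    ∃ 𝒯' H' P', Certified R M x₀ 𝒯' H' P' ∧ P'.card = P.card + 1 ∧ ShatteredDFFT Φ 𝒯' H' d := by
  obtain _ | ⟨_, _, _, x, y, φ, hy, -, h⟩ := hs
  have hy_anchor : ∀ e ∈ P, y (e.1, 1) = 0 :=
    fun e he => by have : y (e.1, 1) ≠ 1 := hy _ (hc.anchor e he); omega
  by_cases hnew : ∃ e ∈ P, (e.1, negF (φ (e.1, 1))) ∉ P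
  · obtain ⟨e, he, hnew⟩ := hnew
    refine ⟨_, _, _, hc.insert_feature he x (φ (e.1, 1)), Finset.card_insert_of_notMem hnew, ?_⟩
    simpa [hy_anchor e he] using h _ (hc.anchor e he)
  push Not at hnew
  -- `x` is labelled `0` in the branch explained by `(e.1, 1)`, so the feature given there
  -- is true at `x`
  have hsep : ∀ e ∈ P, ∃ γ, (e.1, γ) ∈ P ∧ γ x = false := by
    intro e he
    refine ⟨_, hnew e he, ?_⟩
    obtain ⟨T, hT, hcons⟩ := (h _ (hc.anchor e he)).exists_consistent_s5 ⟨_, Set.mem_insert _ _⟩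
    have hla : T.label e.1 = 1 := hcons _ (Set.mem_insert_of_mem _ (hc.anchor e he))
    have hlx : T.label x = 0 := hT.2.1.trans (hy_anchor e he)
    simp [negF, (Teacher.apply_of_feedback_eq_some (by rw [hlx, hla]; decide) hT.2.2).1]
  -- otherwise `(x, 1)` is in the history, and the branch it explains relabels `x`
  have hfresh : (x, φ (x₀, 0)) ∉ P := by
    intro hxP
    obtain ⟨T, -, hcons⟩ := (h _ (hc.anchor _ hxP)).exists_consistent_s5 ⟨_, Set.mem_insert _ _⟩
    exact hy _ (hc.anchor _ hxP) ((hcons _ (Set.mem_insert _ _)).symm.trans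
      (hcons _ (Set.mem_insert_of_mem _ (hc.anchor _ hxP))))
  refine ⟨_, _, _, hc.insert_anchor (φ (x₀, 0)) hsep, Finset.card_insert_of_notMem hfresh, ?_⟩
  simpa [Fin.eq_one_of_ne_zero _ (hy _ hc.root)] using h _ hc.root

theorem Certified.add_card_le (hc : Certified R M x₀ 𝒯 H P) {d : ℕ}
    (hs : ShatteredDFFT Φ 𝒯 H d) : d + P.card ≤ R * M := by
  induction d generalizing 𝒯 H P with
  | zero =>
    obtain ⟨T, hT, hcons⟩ := hs.exists_consistent_s5 ⟨_, hc.root⟩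
    obtain ⟨D, Pm, hpres⟩ := hc.subset hT
    simpa using (hc.certifies T hT hcons D Pm hpres).card_le
  | succ d ih =>
    obtain ⟨𝒯', H', P', hc', hcard, hs'⟩ := hc.exists_branch hs
    have := ih hc' hs'
    omega

theorem le_of_shatteredDFFT_RCMClass (x₀ : X) {d : ℕ}
    (hs : ShatteredDFFT Φ (RCMClass X Φ 1 R M) {(x₀, 0)} d) : d ≤ R * M := by
  have hc : Certified R M x₀ (RCMClass X Φ 1 R M) {(x₀, 0)} ∅ :=
    ⟨subset_rfl, rfl, by simp, fun _ _ _ _ _ _ => ⟨by simp, by simp⟩⟩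
  simpa using hc.add_card_le hs

end UpperBound

noncomputable section BlockTeacher

variable {R M : ℕ} (B : Fin R → Finset ℕ)

def blockLabel (u : ℕ → Bool) : Fin 2 :=
  if ∃ j, ∀ ν ∈ B j, u ν = true then 1 else 0

def blockPrimary (hR : 0 < R) (u : ℕ → Bool) : Fin R :=
  if h : ∃ j, ∀ ν ∈ B j, u ν = true then h.choose else ⟨0, hR⟩

def firstFalse (s : Finset ℕ) (v : ℕ → Bool) : ℕ :=
  sInf {ν | ν ∈ s ∧ v ν = false}

def blockFeedback (hR : 0 < R) (u v : ℕ → Bool) : Option ((ℕ → Bool) → Bool) :=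
  if blockLabel B u = blockLabel B v then none
  else if blockLabel B v = 0 then some (Function.eval (firstFalse (B (blockPrimary B hR u)) v))
  else some (negF (Function.eval (firstFalse (B (blockPrimary B hR v)) u)))

def blockData (hB : ∀ j, (B j).card ≤ M) : RCMData (ℕ → Bool) PhiNat 1 R M where
  S j := (B j).image Function.eval
  q _ := 1
  hSΦ j := by
    rintro φ hφ
    obtain ⟨ν, -, rfl⟩ := Finset.mem_image.1 hφ
    exact Or.inl ⟨ν, rfl⟩
  hSM j := Finset.card_image_le.trans (hB j)
  hq _ := by decide

variable {B}

theorem satAll_blockData_iff {hB : ∀ j, (B j).card ≤ M} {j : Fin R} {u : ℕ → Bool} :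
    SatAll ((blockData B hB).S j) u ↔ ∀ ν ∈ B j, u ν = true :=
  Finset.forall_mem_image

theorem blockLabel_eq_one_iff {u : ℕ → Bool} :
    blockLabel B u = 1 ↔ ∃ j, ∀ ν ∈ B j, u ν = true := by
  unfold blockLabel
  split_ifs with h <;> simp [h]

theorem blockLabel_eq_zero_iff {u : ℕ → Bool} :
    blockLabel B u = 0 ↔ ∀ j, ∃ ν ∈ B j, u ν = false := by
  unfold blockLabel
  split_ifs with h <;> simpa using h

theorem blockPrimary_spec {hR : 0 < R} {u : ℕ → Bool} (hu : blockLabel B u = 1) :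
    ∀ ν ∈ B (blockPrimary B hR u), u ν = true := by
  have h := blockLabel_eq_one_iff.1 hu
  rw [blockPrimary, dif_pos h]
  exact h.choose_spec

theorem firstFalse_spec {s : Finset ℕ} {v : ℕ → Bool} (h : ∃ ν ∈ s, v ν = false) :
    firstFalse s v ∈ s ∧ v (firstFalse s v) = false := by
  obtain ⟨ν, hν, hv⟩ := h
  exact Nat.sInf_mem (s := {ν | ν ∈ s ∧ v ν = false}) ⟨ν, hν, hv⟩

theorem isRCMLabel_blockLabel (hB : ∀ j, (B j).card ≤ M) :
    IsRCMLabel (blockData B hB) (blockLabel B) := by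
  intro u
  simp only [satAll_blockData_iff]
  refine ⟨fun j hj => blockLabel_eq_one_iff.2 ⟨j, hj⟩, fun h => ?_⟩
  exact blockLabel_eq_zero_iff.2 fun j => by simpa using h j

theorem isPrimaryMap_blockPrimary (hB : ∀ j, (B j).card ≤ M) (hR : 0 < R) :
    IsPrimaryMap (blockData B hB) (blockLabel B) (blockPrimary B hR) := by
  intro u hu
  have hu1 : blockLabel B u = 1 := Fin.eq_one_of_ne_zero _ hu
  exact ⟨satAll_blockData_iff.2 (blockPrimary_spec hu1), hu1.symm⟩

theorem rcmFeedbackOK_blockFeedback (hB : ∀ j, (B j).card ≤ M) (hR : 0 < R) :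
    RCMFeedbackOK (blockData B hB) (blockLabel B) (blockPrimary B hR) (blockFeedback B hR) := by
  intro u v hne
  rw [blockFeedback, if_neg hne]
  by_cases hv : blockLabel B v = 0
  · have hu : blockLabel B u = 1 := by omega
    obtain ⟨hmem, hfalse⟩ := firstFalse_spec (blockLabel_eq_zero_iff.1 hv (blockPrimary B hR u))
    refine ⟨_, by rw [if_pos hv], ?_⟩
    rw [if_neg (not_not_intro hv)]
    exact ⟨Finset.mem_image_of_mem _ hmem, _, Or.inr ⟨_, rfl⟩, by simpa [negF] using hfalse,
      (negF_negF _).symm⟩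
  · have hu : blockLabel B u = 0 := by omega
    obtain ⟨hmem, hfalse⟩ := firstFalse_spec (blockLabel_eq_zero_iff.1 hu (blockPrimary B hR v))
    refine ⟨_, by rw [if_neg hv], ?_⟩
    rw [if_pos hv]
    exact ⟨⟨Or.inr ⟨_, rfl⟩, by simpa [negF] using hfalse⟩, _, Finset.mem_image_of_mem _ hmem, rfl⟩

def blockTeacher (hB : ∀ j, (B j).card ≤ M) (hR : 0 < R) : Teacher (ℕ → Bool) (Fin 2) PhiNat where
  label := blockLabel B
  feedback := blockFeedback B hR
  feedback_spec :=
    (rcmFeedbackOK_blockFeedback hB hR).feedback_spec (isPrimaryMap_blockPrimary hB hR)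

theorem blockTeacher_mem_RCMClass (hB : ∀ j, (B j).card ≤ M) (hR : 0 < R) :
    blockTeacher hB hR ∈ RCMClass (ℕ → Bool) PhiNat 1 R M :=
  ⟨blockData B hB, blockPrimary B hR, isRCMLabel_blockLabel hB,
    isPrimaryMap_blockPrimary hB hR, rcmFeedbackOK_blockFeedback hB hR⟩

def leastDiff (u v : ℕ → Bool) : ℕ :=
  sInf {ν | u ν = true ∧ v ν = false}

theorem firstFalse_eq_leastDiff {s : Finset ℕ} {u v : ℕ → Bool} (hu : ∀ ν ∈ s, u ν = true)
    (hmem : leastDiff u v ∈ s) (hv : v (leastDiff u v) = false) :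
    firstFalse s v = leastDiff u v := by
  obtain ⟨hfirst, hfalse⟩ := firstFalse_spec ⟨_, hmem, hv⟩
  exact le_antisymm (Nat.sInf_le ⟨hmem, hv⟩) (Nat.sInf_le ⟨hu _ hfirst, hfalse⟩)

theorem blockTeacher_feedback_of_label_one (hB : ∀ j, (B j).card ≤ M) (hR : 0 < R)
    {u v : ℕ → Bool} (hu : blockLabel B u = 1) (hv : blockLabel B v = 0)
    (hmem : leastDiff u v ∈ B (blockPrimary B hR u)) (hfalse : v (leastDiff u v) = false) :
    (blockTeacher hB hR).feedback u v = some (Function.eval (leastDiff u v)) := by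
  change blockFeedback B hR u v = _
  rw [blockFeedback, if_neg (by rw [hu, hv]; decide), if_pos hv,
    firstFalse_eq_leastDiff (blockPrimary_spec hu) hmem hfalse]

theorem blockTeacher_feedback_of_label_zero (hB : ∀ j, (B j).card ≤ M) (hR : 0 < R)
    {u v : ℕ → Bool} (hu : blockLabel B u = 0) (hv : blockLabel B v = 1)
    (hmem : leastDiff v u ∈ B (blockPrimary B hR v)) (hfalse : u (leastDiff v u) = false) :
    (blockTeacher hB hR).feedback u v = some (negF (Function.eval (leastDiff v u))) := by
  change blockFeedback B hR u v = _
  rw [blockFeedback, if_neg (by rw [hu, hv]; decide), if_neg (by rw [hv]; decide),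
    firstFalse_eq_leastDiff (blockPrimary_spec hv) hmem hfalse]

end BlockTeacher

noncomputable section Schedule

variable {R M : ℕ}

def roundExample (M t : ℕ) : ℕ → Bool :=
  fun ν => decide ((Nat.unpair ν).1 = t / M ∧ (Nat.unpair ν).2 ≠ t + 1)

def roundCoord (M : ℕ) (b : ℕ → Fin 2) (t : ℕ) : ℕ :=
  Nat.pair (t / M) (if b t = 1 then 0 else t + 1)

def roundBlock (M : ℕ) (b : ℕ → Fin 2) (c : ℕ) : Finset ℕ :=
  (Finset.range M).image fun k => roundCoord M b (c * M + k)

def roundFeature (M t : ℕ) (p : (ℕ → Bool) × Fin 2) : (ℕ → Bool) → Bool :=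
  if p.2 = 0 then Function.eval (leastDiff (roundExample M t) p.1)
  else negF (Function.eval (leastDiff p.1 (roundExample M t)))

@[simp]
theorem roundExample_pair (M t c i : ℕ) :
    roundExample M t (Nat.pair c i) = decide (c = t / M ∧ i ≠ t + 1) := by
  simp [roundExample]

theorem card_roundBlock_le (b : ℕ → Fin 2) (c : ℕ) : (roundBlock M b c).card ≤ M :=
  Finset.card_image_le.trans (Finset.card_range M).le

theorem mem_roundBlock_iff (hM : 0 < M) {b : ℕ → Fin 2} {c ν : ℕ} :
    ν ∈ roundBlock M b c ↔ ∃ t, t / M = c ∧ roundCoord M b t = ν := by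
  simp only [roundBlock, Finset.mem_image, Finset.mem_range]
  constructor
  · rintro ⟨k, hk, rfl⟩
    refine ⟨c * M + k, ?_, rfl⟩
    rw [Nat.mul_comm, Nat.mul_add_div hM, Nat.div_eq_of_lt hk, Nat.add_zero]
  · rintro ⟨t, rfl, rfl⟩
    exact ⟨t % M, Nat.mod_lt t hM, by rw [Nat.mul_comm, Nat.div_add_mod]⟩

theorem roundCoord_mem_roundBlock (hM : 0 < M) (b : ℕ → Fin 2) (t : ℕ) :
    roundCoord M b t ∈ roundBlock M b (t / M) :=
  (mem_roundBlock_iff hM).2 ⟨t, rfl, rfl⟩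

theorem roundBlock_nonempty (hM : 0 < M) (b : ℕ → Fin 2) (c : ℕ) :
    (roundBlock M b c).Nonempty := by
  simpa [roundBlock] using hM.ne'

theorem forall_roundExample_eq_true_iff (hM : 0 < M) {b : ℕ → Fin 2} {c t : ℕ} :
    (∀ ν ∈ roundBlock M b c, roundExample M t ν = true) ↔ c = t / M ∧ b t = 1 := by
  simp only [mem_roundBlock_iff hM, forall_exists_index, and_imp]
  constructor
  · intro h
    have hc : c = t / M := by
      have := h _ (c * M) (Nat.mul_div_cancel c hM) rfl
      simp only [roundCoord, roundExample_pair, Nat.mul_div_cancel c hM, decide_eq_true_eq] at this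
      exact this.1
    subst hc
    have hbt := h _ t rfl rfl
    simp only [roundCoord, roundExample_pair] at hbt
    split_ifs at hbt with hbt' <;> simp_all
  · rintro ⟨rfl, hbt⟩ ν s hs rfl
    have hst : b s = 1 ∨ s ≠ t := by by_cases h : s = t <;> simp_all
    simp only [roundCoord, roundExample_pair, hs, true_and, decide_eq_true_eq]
    split_ifs <;> omega

theorem leastDiff_roundExample_mem (hM : 0 < M) {b : ℕ → Fin 2} {t : ℕ} {v : ℕ → Bool}
    (ht : b t = 1) (hv : v = (fun _ => false) ∨ ∃ s, v = roundExample M s ∧ b s = 0) :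
    leastDiff (roundExample M t) v ∈ roundBlock M b (t / M) ∧
      v (leastDiff (roundExample M t) v) = false := by
  by_cases hbase : v (Nat.pair (t / M) 0) = false
  · have hleast : leastDiff (roundExample M t) v = Nat.pair (t / M) 0 := by
      refine IsLeast.csInf_eq ⟨⟨by simp, hbase⟩, fun ν hν => ?_⟩
      have hslot : (Nat.unpair ν).1 = t / M := by
        have h := hν.1
        simp only [roundExample, decide_eq_true_eq] at h
        exact h.1
      rw [← Nat.pair_unpair ν, hslot]
      rcases (Nat.zero_le (Nat.unpair ν).2).eq_or_lt with h | h
      · rw [← h]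
      · exact (Nat.pair_lt_pair_right _ h).le
    rw [hleast]
    exact ⟨by simpa [roundCoord, ht] using roundCoord_mem_roundBlock hM b t, hbase⟩
  · obtain ⟨s, rfl, hs⟩ : ∃ s, v = roundExample M s ∧ b s = 0 := by
      rcases hv with rfl | h
      · simp at hbase
      · exact h
    have hblock : t / M = s / M := by simpa using hbase
    have hst : s ≠ t := by rintro rfl; simp_all
    have hleast : leastDiff (roundExample M t) (roundExample M s) = Nat.pair (t / M) (s + 1) := by
      refine IsLeast.csInf_eq ⟨⟨by simp [hst], by simp [hblock]⟩, fun ν hν => le_of_eq ?_⟩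
      obtain ⟨hνt, hνs⟩ := hν
      simp only [roundExample, decide_eq_true_eq, decide_eq_false_iff_not] at hνt hνs
      rw [← Nat.pair_unpair ν, hνt.1]
      congr 1
      by_contra h
      exact hνs ⟨hνt.1.trans hblock, Ne.symm h⟩
    rw [hleast]
    exact ⟨by simpa [roundCoord, hs, hblock] using roundCoord_mem_roundBlock hM b s, by simp⟩

end Schedule

section LowerBound

variable {R M : ℕ}

theorem blockLabel_roundExample (hM : 0 < M) {b : ℕ → Fin 2} {t : ℕ} (ht : t < R * M) :
    blockLabel (fun j : Fin R => roundBlock M b j) (roundExample M t) = b t := by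
  have htR : t / M < R := (Nat.div_lt_iff_lt_mul hM).2 ht
  have key : blockLabel (fun j : Fin R => roundBlock M b j) (roundExample M t) = 1 ↔ b t = 1 := by
    simp only [blockLabel_eq_one_iff, forall_roundExample_eq_true_iff hM]
    exact ⟨fun ⟨_, _, h⟩ => h, fun h => ⟨⟨t / M, htR⟩, rfl, h⟩⟩
  omega

theorem blockLabel_roundBlock_false (hM : 0 < M) (b : ℕ → Fin 2) :
    blockLabel (fun j : Fin R => roundBlock M b j) (fun _ => false) = 0 :=
  blockLabel_eq_zero_iff.2 fun j => by
    obtain ⟨ν, hν⟩ := roundBlock_nonempty hM b j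
    exact ⟨ν, hν, rfl⟩

theorem blockPrimary_roundExample (hR : 0 < R) (hM : 0 < M) {b : ℕ → Fin 2} {t : ℕ}
    (ht : t < R * M) (hbt : b t = 1) :
    (blockPrimary (fun j : Fin R => roundBlock M b j) hR (roundExample M t) : ℕ) = t / M :=
  ((forall_roundExample_eq_true_iff hM).1
    (blockPrimary_spec (B := fun j : Fin R => roundBlock M b j)
      (by rw [blockLabel_roundExample hM ht, hbt]))).1

theorem realizes_roundFeature (hR : 0 < R) (hM : 0 < M) (b : ℕ → Fin 2) :
    Realizes (blockTeacher (B := fun j : Fin R => roundBlock M b j)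
        (fun _ => card_roundBlock_le b _) hR) {((fun _ => false), 0)}
      (roundExample M) (fun _ p => p.2.rev) (roundFeature M) b (R * M) := by
  intro t ht
  refine ⟨blockLabel_roundExample hM ht, ?_⟩
  rintro ⟨v, l⟩ hp hans
  have hv : (v = (fun _ => false) ∧ l = 0) ∨ ∃ s < t, v = roundExample M s ∧ l = b s := by
    simpa [roundHistory] using hp
  rcases (show l = 0 ∨ l = 1 by omega) with rfl | rfl
  · have hbt : b t = 1 := by simpa using hans.symm
    have hv' : v = (fun _ => false) ∨ ∃ s, v = roundExample M s ∧ b s = 0 := by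
      rcases hv with ⟨rfl, -⟩ | ⟨s, -, rfl, hs⟩
      · exact Or.inl rfl
      · exact Or.inr ⟨s, rfl, hs.symm⟩
    have hlv : blockLabel (fun j : Fin R => roundBlock M b j) v = 0 := by
      rcases hv with ⟨rfl, -⟩ | ⟨s, hs, rfl, hl⟩
      · exact blockLabel_roundBlock_false hM b
      · rw [blockLabel_roundExample hM (by omega), ← hl]
    obtain ⟨hmem, hfalse⟩ := leastDiff_roundExample_mem hM hbt hv'
    rw [roundFeature, if_pos rfl]
    exact blockTeacher_feedback_of_label_one _ hR (by rw [blockLabel_roundExample hM ht, hbt]) hlv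
      (by rwa [blockPrimary_roundExample hR hM ht hbt]) hfalse
  · have hbt : b t = 0 := by simpa using hans.symm
    obtain ⟨s, hs, rfl, hbs⟩ : ∃ s < t, v = roundExample M s ∧ 1 = b s := by
      rcases hv with ⟨-, h⟩ | h
      · exact absurd h (by decide)
      · exact h
    obtain ⟨hmem, hfalse⟩ := leastDiff_roundExample_mem hM hbs.symm (Or.inr ⟨t, rfl, hbt⟩)
    rw [roundFeature, if_neg (show (1 : Fin 2) ≠ 0 by decide)]
    exact blockTeacher_feedback_of_label_zero _ hR (by rw [blockLabel_roundExample hM ht, hbt])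
      (by rw [blockLabel_roundExample hM (by omega), ← hbs])
      (by rwa [blockPrimary_roundExample hR hM (by omega) hbs.symm]) hfalse

theorem shatteredDFFT_RCMClass_natural (hR : 0 < R) (hM : 0 < M) :
    ShatteredDFFT PhiNat (RCMClass (ℕ → Bool) PhiNat 1 R M)
      {((fun _ => false : ℕ → Bool), (0 : Fin 2))} (R * M) := by
  refine shatteredDFFT_of_forall_realizes _ _ (roundExample M) (fun _ p => p.2.rev)
    (roundFeature M) _ (fun _ p => (by decide : ∀ i : Fin 2, i.rev ≠ i) p.2) (fun t p => ?_)
    fun b => ⟨_, blockTeacher_mem_RCMClass _ hR, ?_, realizes_roundFeature hR hM b⟩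
  · unfold roundFeature
    split_ifs
    exacts [Or.inl ⟨_, rfl⟩, Or.inr ⟨_, rfl⟩]
  · rintro p rfl
    exact blockLabel_roundBlock_false hM b

end LowerBound

/-- **Theorem (exact DFF dimension of the relaxed component model on the
natural feature construction).** Let `(X, Φ)` be the natural feature
construction (`X = {0,1}^ℕ`, `Φ` the coordinate features and their
negations), let the label set be `{0, 1}` (that is, `L = 1`), and let
`H = {(0̄, 0)}`.  Given `R, M ∈ ℕ`, let `𝒯` be the relaxed component model
teacher class with parameters `(1, R, M)` over `(X, {0,1}, Φ)`.  Then
`DFFdim(𝒯, H) = R · M`. -/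
theorem DFFdim_RCM_natural_eq (R M : ℕ) :
    DFFdim PhiNat (RCMClass (ℕ → Bool) PhiNat 1 R M)
      {((fun _ => false : ℕ → Bool), (0 : Fin 2))} = ((R * M : ℕ) : ℕ∞) := by
  refine le_antisymm (sSup_le ?_) ?_
  · rintro _ ⟨n, rfl, hs⟩
    exact_mod_cast le_of_shatteredDFFT_RCMClass _ hs
  · by_cases h : R * M = 0
    · simp [h]
    obtain ⟨hR, hM⟩ := mul_ne_zero_iff.1 h
    exact le_sSup ⟨R * M, rfl,
      shatteredDFFT_RCMClass_natural (Nat.pos_of_ne_zero hR) (Nat.pos_of_ne_zero hM)⟩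
end

section
/- For any hypothesis class F ⊆ Y^X (with Y finite), DFFdim(OtD(F)) ≥ Ldim(F). -/
open scoped Classical

/-- The indicator feature of a single element. -/
noncomputable def indF {Z : Type} (w : Z) : Z → Bool :=
  fun z => decide (z = w)

/-- The feature set of the mapping `OtD`: all singleton indicator features on
`X ⊕ Y` (the example domain `X` enlarged by a fresh example `⋆_y = inr y`
for every label `y`). -/
noncomputable def OtDPhi (X Y : Type) : Set ((X ⊕ Y) → Bool) :=
  {φ | ∃ w : X ⊕ Y, φ = indF w}

/-- The history of the mapping `OtD`: each fresh example `⋆_y` labeled `y`. -/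
def OtDHist (X Y : Type) : Set ((X ⊕ Y) × Y) :=
  {p | ∃ y : Y, p = (Sum.inr y, y)}

/-- The teacher class of the mapping `OtD` applied to a hypothesis class `F`:
for `f ∈ F`, the teacher labels by the extension of `f` sending `⋆_y` to `y`,
and its feature feedback on `(x, x')` is the indicator of `x`. -/
noncomputable def OtDClass {X Y : Type} (F : Set (X → Y)) :
    Set (Teacher (X ⊕ Y) Y (OtDPhi X Y)) :=
  {T | ∃ f ∈ F, T.label = Sum.elim f id ∧
    T.feedback = fun x _ => some (indF x)}

/-- The examples appearing in a history. -/
def HistX {X Y : Type} (H : Set (X × Y)) : Set X := {x | ∃ y : Y, (x, y) ∈ H}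

/-- The mapping `DtO` from DFF to Online Learning: the class of restrictions
of the labeling functions of `𝒯` to the examples not appearing in `H`. -/
def DtO {X Y : Type} {Φ : Set (X → Bool)} (𝒯 : Set (Teacher X Y Φ))
    (H : Set (X × Y)) : Set ((((HistX H)ᶜ : Set X)) → Y) :=
  {g | ∃ T ∈ 𝒯, g = fun x => T.label x.1}

/-- `LShat F n` holds iff there is a Littlestone tree of height `n` shattered
by the hypothesis class `F`: a complete binary tree with examples at internal
nodes, two distinct labels on the outgoing edges of each internal node, and
every root-to-leaf path realized by some hypothesis of `F`. -/
inductive LShat {X Y : Type} : Set (X → Y) → ℕ → Prop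
  | leaf (F : Set (X → Y)) (h : F.Nonempty) : LShat F 0
  | node (F : Set (X → Y)) (n : ℕ) (x : X) (y₁ y₂ : Y) (hne : y₁ ≠ y₂)
      (h₁ : LShat {f ∈ F | f x = y₁} n) (h₂ : LShat {f ∈ F | f x = y₂} n) :
      LShat F (n + 1)

/-- The (multiclass) Littlestone dimension of a hypothesis class: the maximal
height of a Littlestone tree for it (possibly infinite). -/
noncomputable def Ldim {X Y : Type} (F : Set (X → Y)) : ℕ∞ :=
  sSup {d : ℕ∞ | ∃ n : ℕ, d = n ∧ LShat F n}

/-- `F` admits an infinite-depth Littlestone tree: a binary branching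
assignment of examples and pairs of distinct labels to finite binary
sequences such that every finite branch is consistent with some hypothesis
of `F`. -/
def InfLTree {X Y : Type} (F : Set (X → Y)) : Prop :=
  ∃ (x : List Bool → X) (y : List Bool → Bool → Y),
    (∀ s : List Bool, y s false ≠ y s true) ∧
    ∀ b : List Bool, ∃ f ∈ F,
      ∀ (s : List Bool) (c : Bool), (s ++ [c]) <+: b → f (x s) = y s c


/-!
A Littlestone tree for `F` becomes a shattered DFF tree for `OtD(F)` with the same examples:
at an inner node with example `x` and branch labels `y₁ ≠ y₂`, whatever explanation pair
`(x̂, ŷ)` the learner offers, one of `y₁, y₂` differs from `ŷ`, and the teachers of `OtD(F)`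
answering with that label give the same feedback `𝕀[x]`, so they are exactly the teachers
`T_f` of the corresponding Littlestone subtree.
-/

/-- The teacher `T_f` of the mapping `OtD`. -/
noncomputable def OtDTeacher {X Y : Type} (f : X → Y) : Teacher (X ⊕ Y) Y (OtDPhi X Y) where
  label := Sum.elim f id
  feedback := fun x _ => some (indF x)
  feedback_spec := by
    intro x xh hne
    have hxh : xh ≠ x := fun h => hne (by rw [h])
    exact ⟨indF x, ⟨x, rfl⟩, rfl, by simp [indF], by simp [indF, hxh]⟩

lemma OtDTeacher_mem_OtDClass {X Y : Type} {F : Set (X → Y)} {f : X → Y} (hf : f ∈ F) :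
    OtDTeacher f ∈ OtDClass F :=
  ⟨f, hf, rfl, rfl⟩

lemma consistentH_OtDTeacher_OtDHist {X Y : Type} (f : X → Y) :
    ConsistentH (OtDTeacher f) (OtDHist X Y) := by
  rintro p ⟨y, rfl⟩
  rfl

lemma TRestrict_OtDClass_inl {X Y : Type} (F : Set (X → Y)) (x : X) (xh : X ⊕ Y) (y : Y) :
    TRestrict (OtDClass F) (Sum.inl x) xh y (indF (Sum.inl x)) = OtDClass {f ∈ F | f x = y} := by
  ext T
  constructor
  · rintro ⟨⟨f, hf, hlabel, hfeedback⟩, hy, -⟩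
    exact ⟨f, ⟨hf, by simpa [hlabel] using hy⟩, hlabel, hfeedback⟩
  · rintro ⟨f, ⟨hf, hfx⟩, hlabel, hfeedback⟩
    exact ⟨⟨f, hf, hlabel, hfeedback⟩, by simp [hlabel, hfx], by simp [hfeedback]⟩

lemma consistentH_OtDTeacher_insert {X Y : Type} {f : X → Y} {H : Set ((X ⊕ Y) × Y)}
    {x : X} {y : Y} (hfx : f x = y) (hH : ConsistentH (OtDTeacher f) H) :
    ConsistentH (OtDTeacher f) (insert (Sum.inl x, y) H) := by
  rintro p (rfl | hp)
  · exact hfx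
  · exact hH p hp

lemma LShat.shatteredDFFT_OtDClass {X Y : Type} {F : Set (X → Y)} {n : ℕ} (hF : LShat F n)
    {H : Set ((X ⊕ Y) × Y)} (hH : ∀ f ∈ F, ConsistentH (OtDTeacher f) H) :
    ShatteredDFFT (OtDPhi X Y) (OtDClass F) H n := by
  induction hF generalizing H with
  | leaf F hne =>
    obtain ⟨f, hf⟩ := hne
    exact .leaf _ _ ⟨OtDTeacher f, OtDTeacher_mem_OtDClass hf, hH f hf⟩
  | node F n x y₁ y₂ hne _ _ ih₁ ih₂ =>
    refine .node _ _ _ (Sum.inl x) (fun p => if p.2 = y₁ then y₂ else y₁)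
      (fun _ => indF (Sum.inl x)) ?_ (fun _ _ => ⟨_, rfl⟩) ?_
    · intro p _
      split_ifs with hp
      · exact fun h => hne (h.trans hp).symm
      · exact fun h => hp h.symm
    · intro p _
      rw [TRestrict_OtDClass_inl]
      split_ifs
      · exact ih₂ fun f hf => consistentH_OtDTeacher_insert hf.2 (hH f hf.1)
      · exact ih₁ fun f hf => consistentH_OtDTeacher_insert hf.2 (hH f hf.1)

lemma Ldim_le_DFFdim_of_forall_shatteredDFFT {X Y X' Y' : Type} {F : Set (X → Y)}
    {Φ : Set (X' → Bool)} {𝒯 : Set (Teacher X' Y' Φ)} {H : Set (X' × Y')}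
    (h : ∀ n, LShat F n → ShatteredDFFT Φ 𝒯 H n) : Ldim F ≤ DFFdim Φ 𝒯 H := by
  apply sSup_le_sSup
  rintro d ⟨n, rfl, hn⟩
  exact ⟨n, rfl, h n hn⟩

theorem DFFdim_OtD_ge_Ldim_general {X Y : Type} (F : Set (X → Y)) :
    Ldim F ≤ DFFdim (OtDPhi X Y) (OtDClass F) (OtDHist X Y) :=
  Ldim_le_DFFdim_of_forall_shatteredDFFT fun _ hF =>
    hF.shatteredDFFT_OtDClass fun f _ => consistentH_OtDTeacher_OtDHist f

/-- **Lemma (`OtD` does not decrease the dimension).** For any hypothesis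
class `F ⊆ Y^X` (with `Y` finite), `DFFdim(OtD(F)) ≥ Ldim(F)`. -/
theorem DFFdim_OtD_ge_Ldim {X Y : Type} [Finite Y] (F : Set (X → Y)) :
    Ldim F ≤ DFFdim (OtDPhi X Y) (OtDClass F) (OtDHist X Y) :=
  DFFdim_OtD_ge_Ldim_general F
end
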